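/- Let 𝓛 be a distributive lattice, S a nonempty finite set of elements of 𝓛, and p₁, p₂, λ, t ∈ 𝓛. Suppose (1) p₁ ≤ p₂ ⊔ λ, (2) p₁ ≤ p₂ ⊔ ℓ for every ℓ ∈ S, (3) p₂ ≤ t, and (4) ¬(p₁ ≤ t). Then ¬((⨅_{ℓ ∈ S} ℓ) ⊓ λ ≤ t). -/
import Mathlib

/-- Lattice content of the base case of the lock-respecting lemma:
if `p₁ ≤ p₂ ⊔ lam`, `p₁ ≤ p₂ ⊔ ℓ` for all `ℓ ∈ S`, `p₂ ≤ t`, and `¬(p₁ ≤ t)`,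
then `(⨅ S) ⊓ lam` is not below `t`. -/
theorem lock_respect_base {L : Type*} [DistribLattice L] (S : Finset L) (hS : S.Nonempty)
    (p₁ p₂ lam t : L)
    (h1 : p₁ ≤ p₂ ⊔ lam) (h2 : ∀ ℓ ∈ S, p₁ ≤ p₂ ⊔ ℓ)
    (h3 : p₂ ≤ t) (h4 : ¬ p₁ ≤ t) :
    ¬ (S.inf' hS id ⊓ lam ≤ t) := by
  intro h
  have key : p₁ ≤ p₂ ⊔ (S.inf' hS id ⊓ lam) := by
    rw [sup_inf_left, Finset.inf'_sup_distrib_left]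
    exact le_inf (Finset.le_inf' hS _ fun ℓ hℓ => h2 ℓ hℓ) h1
  exact h4 (key.trans (sup_le h3 h))
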